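/- arXiv:1907.11573 — 3 statements merged into one kernel-verified Lean document; each statement's English description precedes it below -/
import Mathlib

section
/- Let L be a language with blim L = {w} for an ω-word w. Then there is a function f : {u ∈ L | u <_ℓ w} → ℕ such that u <_ℓ v implies f u < f v, and there is a function g : {u ∈ L | w <_ℓ u} → ℕ such that u <_ℓ v implies g v < g u; that is, the suborder {u ∈ L | u <_ℓ w} of (L, <_ℓ) embeds into ω and the suborder {u ∈ L | w <_ℓ u} embeds into ω* = −ω. -/
variable {α : Type*} [Fintype α] [LinearOrder α] [Nonempty α]

/-- `w↾n`, the length-`n` prefix of the ω-word `w`. -/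
def restrict (w : ℕ → α) (n : ℕ) : List α := List.ofFn (fun i : Fin n => w i)

/-- `w` is a limit of `L`: every finite prefix of `w` is a proper prefix of some word of `L`. -/
def blim (L : Set (List α)) : Set (ℕ → α) :=
  {w | ∀ n : ℕ, ∃ u ∈ L, restrict w n <+: u ∧ restrict w n ≠ u}

/-- `u <_ℓ w` for a word `u` and an ω-word `w`. -/
def wordLtOmega (u : List α) (w : ℕ → α) : Prop :=
  u = restrict w u.length ∨
    ∃ (i : ℕ) (h : i < u.length), u.take i = restrict w i ∧ u.get ⟨i, h⟩ < w i

/-- `w <_ℓ u` for an ω-word `w` and a word `u`. -/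
def omegaLtWord (w : ℕ → α) (u : List α) : Prop :=
  ∃ (i : ℕ) (h : i < u.length), u.take i = restrict w i ∧ w i < u.get ⟨i, h⟩

/-- `w <_ℓ w'` for ω-words. -/
def omegaLt (w w' : ℕ → α) : Prop :=
  ∃ n : ℕ, (∀ i < n, w i = w' i) ∧ w n < w' n

/-- `w ≤_ℓ w'` for ω-words. -/
def omegaLe (w w' : ℕ → α) : Prop := w = w' ∨ omegaLt w w'

/-- Concatenation `u·w` of a finite word and an ω-word. -/
def ocat (u : List α) (w : ℕ → α) : ℕ → α :=
  fun i => if h : i < u.length then u.get ⟨i, h⟩ else w (i - u.length)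

/-- The strict order `u <_s v` on words. -/
def strictLt (u v : List α) : Prop :=
  ∃ (x y z : List α) (a b : α), a < b ∧ u = x ++ a :: y ∧ v = x ++ b :: z

/-- `v^ω` for a nonempty word `v`. -/
def wpow (v : List α) (hv : v ≠ []) : ℕ → α :=
  fun i => v.get ⟨i % v.length, Nat.mod_lt _ (List.length_pos_iff.mpr hv)⟩

/-- `u^n`, the `n`-fold concatenation of the word `u` with itself. -/
def npow (u : List α) (n : ℕ) : List α := (List.replicate n u).flatten

section Aux
set_option linter.unusedSectionVars false

variable {α : Type*} [Fintype α] [LinearOrder α] [Nonempty α]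

lemma restrict_length (w : ℕ → α) (n : ℕ) : (restrict w n).length = n := by
  simp [restrict]

lemma restrict_getElem (w : ℕ → α) {n i : ℕ} (h : i < n) :
    (restrict w n)[i]'(by simpa [restrict_length] using h) = w i := by
  simp [restrict]

lemma take_restrict (w : ℕ → α) {m n : ℕ} (h : m ≤ n) :
    (restrict w n).take m = restrict w m := by
  apply List.ext_getElem
  · simp [restrict_length]; omega
  · intro i h1 h2
    simp only [restrict_length] at h1 h2
    rw [List.getElem_take, restrict_getElem w (show i < n by omega),
      restrict_getElem w (show i < m by simpa using h2)]

lemma take_of_prefix {p v : List α} (h : p <+: v) {i : ℕ} (hi : i ≤ p.length) :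
    v.take i = p.take i := by
  have h1 : p.take i <+: v := (List.take_prefix i p).trans h
  rw [List.prefix_iff_eq_take] at h1
  rw [List.length_take, Nat.min_eq_left hi] at h1
  exact h1.symm

lemma lex_of_prefix {β : Type*} {r : β → β → Prop} {u v : List β}
    (h : u <+: v) (hne : u ≠ v) : List.Lex r u v := by
  induction u generalizing v with
  | nil =>
    cases v with
    | nil => exact absurd rfl hne
    | cons b v => exact List.Lex.nil
  | cons a u ih =>
    obtain ⟨t, ht⟩ := h
    subst ht
    refine List.Lex.cons (ih ⟨t, rfl⟩ ?_)
    intro he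
    exact hne (congrArg (List.cons a) he)

lemma lex_of_getElem {β : Type*} [LinearOrder β] :
    ∀ (i : ℕ) (u v : List β) (hu : i < u.length) (hv : i < v.length),
      u.take i = v.take i → u[i] < v[i] → List.Lex (· < ·) u v := by
  intro i
  induction i with
  | zero =>
    intro u v hu hv _ hlt
    match u, v with
    | a :: u, b :: v => exact List.Lex.rel hlt
  | succ i ih =>
    intro u v hu hv ht hlt
    match u, v with
    | a :: u, b :: v =>
      rw [List.take_succ_cons, List.take_succ_cons] at ht
      injection ht with h1 h2
      subst h1
      exact List.Lex.cons (ih u v (by simpa using hu) (by simpa using hv) h2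
        (by simpa using hlt))

lemma konig (S : Set (List α)) (hS : S.Infinite) :
    ∃ w' : ℕ → α, ∀ n, ∃ u ∈ S, restrict w' n <+: u ∧ restrict w' n ≠ u := by
  classical
  set P : List α → Prop := fun p => {u ∈ S | p <+: u}.Infinite with hP
  have step : ∀ p, P p → ∃ a, P (p ++ [a]) := by
    intro p hp
    by_contra hcon
    push_neg at hcon
    simp only [P, Set.not_infinite] at hcon
    have hsub : {u ∈ S | p <+: u} ⊆ insert p (⋃ a : α, {u ∈ S | p ++ [a] <+: u}) := by
      rintro u ⟨huS, t, rfl⟩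
      cases t with
      | nil => simp
      | cons a t' =>
        right
        exact Set.mem_iUnion.2 ⟨a, huS, t', by simp⟩
    exact hp ((Set.Finite.insert p (Set.finite_iUnion hcon)).subset hsub)
  have hP0 : P [] := by
    have : {u ∈ S | ([] : List α) <+: u} = S := by ext u; simp
    simpa [P, this] using hS
  obtain ⟨chain, h0, hsucc⟩ :
      ∃ c : ℕ → {p : List α // P p}, (c 0).1 = [] ∧ ∀ n, ∃ a, (c (n+1)).1 = (c n).1 ++ [a] := by
    refine ⟨fun n => Nat.rec ⟨[], hP0⟩
      (fun _ pp => ⟨pp.1 ++ [Classical.choose (step pp.1 pp.2)],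
        Classical.choose_spec (step pp.1 pp.2)⟩) n, rfl, fun n => ⟨_, rfl⟩⟩
  have plen : ∀ n, (chain n).1.length = n := by
    intro n
    induction n with
    | zero => rw [h0]; rfl
    | succ n ih =>
      obtain ⟨a, ha⟩ := hsucc n
      rw [ha, List.length_append, ih]
      rfl
  have pprefix : ∀ m n, m ≤ n → (chain m).1 <+: (chain n).1 := by
    intro m n hmn
    induction n, hmn using Nat.le_induction with
    | base => exact List.prefix_refl _
    | succ n hmn ih =>
      obtain ⟨a, ha⟩ := hsucc n
      rw [ha]
      exact ih.trans (List.prefix_append _ _)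
  have hlt1 : ∀ i : ℕ, i < (chain (i+1)).1.length := by
    intro i
    rw [plen]
    omega
  refine ⟨fun i => (chain (i+1)).1[i]'(hlt1 i), ?_⟩
  have hres : ∀ n, restrict (fun i => (chain (i+1)).1[i]'(hlt1 i)) n = (chain n).1 := by
    intro n
    apply List.ext_getElem
    · simp [restrict_length, plen]
    · intro i h1 h2
      rw [restrict_getElem _ (by simpa [restrict_length] using h1)]
      exact (pprefix (i+1) n (by rw [plen] at h2; omega)).getElem (hlt1 i)
  intro n
  have hinf := (chain n).2
  obtain ⟨u, ⟨⟨huS, hupre⟩, hne⟩⟩ :=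
    (hinf.diff (Set.finite_singleton (chain n).1)).nonempty
  refine ⟨u, huS, by rw [hres]; exact hupre, ?_⟩
  rw [hres]
  intro he
  simp only [Set.mem_singleton_iff] at hne
  exact hne he.symm

lemma key_lt (w : ℕ → α) {u v : List α}
    (hu : wordLtOmega u w) (hv : restrict w (u.length + 1) <+: v) :
    List.Lex (· < ·) u v := by
  have hvlen : u.length + 1 ≤ v.length := by
    have := hv.length_le
    rwa [restrict_length] at this
  rcases hu with h1 | ⟨i, hi, ht, hlt⟩
  · have hpre : u <+: v := by
      rw [h1, ← take_restrict w (Nat.le_succ u.length)]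
      exact (List.take_prefix _ _).trans hv
    refine lex_of_prefix hpre ?_
    intro he
    rw [he] at hvlen
    omega
  · have hiv : i < v.length := by omega
    have htv : v.take i = u.take i := by
      rw [ht, take_of_prefix hv (by rw [restrict_length]; omega),
        take_restrict w (by omega)]
    have hgv : v[i] = w i := by
      rw [← restrict_getElem w (show i < u.length + 1 by omega)]
      exact (hv.getElem (by rw [restrict_length]; omega)).symm
    refine lex_of_getElem i u v hi hiv htv.symm ?_
    rw [hgv]
    simpa [List.get_eq_getElem] using hlt

lemma key_gt (w : ℕ → α) {u v : List α}
    (hu : omegaLtWord w u) (hv : restrict w (u.length + 1) <+: v) :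
    List.Lex (· < ·) v u := by
  have hvlen : u.length + 1 ≤ v.length := by
    have := hv.length_le
    rwa [restrict_length] at this
  obtain ⟨i, hi, ht, hlt⟩ := hu
  have hiv : i < v.length := by omega
  have htv : v.take i = u.take i := by
    rw [ht, take_of_prefix hv (by rw [restrict_length]; omega),
      take_restrict w (by omega)]
  have hgv : v[i] = w i := by
    rw [← restrict_getElem w (show i < u.length + 1 by omega)]
    exact (hv.getElem (by rw [restrict_length]; omega)).symm
  refine lex_of_getElem i v u hiv hi htv ?_
  rw [hgv]
  simpa [List.get_eq_getElem] using hlt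

end Aux

/-- if `L` has unique limit `w`, then `(L_{<w}, <_ℓ)` embeds into `ω`
and `(L_{>w}, <_ℓ)` embeds into `ω* = -ω`. -/
theorem stmt10 (L : Set (List α)) (w : ℕ → α) (h : blim L = {w}) :
    (∃ f : {u : List α // u ∈ L ∧ wordLtOmega u w} → ℕ,
      ∀ u v : {u : List α // u ∈ L ∧ wordLtOmega u w},
        List.Lex (· < ·) u.1 v.1 → f u < f v) ∧
    (∃ g : {u : List α // u ∈ L ∧ omegaLtWord w u} → ℕ,
      ∀ u v : {u : List α // u ∈ L ∧ omegaLtWord w u},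
        List.Lex (· < ·) u.1 v.1 → g v < g u) := by

  classical
  have finT : ∀ n, {v | v ∈ L ∧ ¬ (restrict w n <+: v)}.Finite := by
    intro n
    by_contra hfin
    obtain ⟨w', hw'⟩ := konig {v | v ∈ L ∧ ¬ (restrict w n <+: v)} hfin
    have hmem : w' ∈ blim L := by
      intro m
      obtain ⟨u, hu, h1, h2⟩ := hw' m
      exact ⟨u, hu.1, h1, h2⟩
    rw [h] at hmem
    have hww : w' = w := hmem
    obtain ⟨u, hu, h1, _⟩ := hw' n
    exact hu.2 (hww ▸ h1)
  constructor
  · set A : {u : List α // u ∈ L ∧ wordLtOmega u w} → Set (List α) :=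
      fun u => {v | (v ∈ L ∧ wordLtOmega v w) ∧
        (List.Lex (· < ·) v u.1 ∨ v = u.1)} with hA
    have hfin : ∀ u, (A u).Finite := by
      intro u
      apply Set.Finite.subset (Set.Finite.insert u.1 (finT (u.1.length + 1)))
      rintro v ⟨⟨hvL, hvlt⟩, hcmp⟩
      rcases hcmp with hlex | rfl
      · by_cases hpre : restrict w (u.1.length + 1) <+: v
        · exact absurd (key_lt w u.2.2 hpre) (asymm hlex)
        · exact Set.mem_insert_iff.2 (Or.inr ⟨hvL, hpre⟩)
      · exact Set.mem_insert _ _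
    refine ⟨fun u => (A u).ncard, ?_⟩
    intro u v huv
    refine Set.ncard_lt_ncard ⟨?_, ?_⟩ (hfin v)
    · rintro x ⟨hx1, hx2⟩
      refine ⟨hx1, Or.inl ?_⟩
      rcases hx2 with hlex | rfl
      · exact List.lex_trans (fun h₁ h₂ => lt_trans h₁ h₂) hlex huv
      · exact huv
    · intro hsub
      have hvv : v.1 ∈ A v := ⟨v.2, Or.inr rfl⟩
      rcases (hsub hvv).2 with hlex | heq
      · exact asymm huv hlex
      · rw [heq] at huv; exact asymm huv huv
  · set B : {u : List α // u ∈ L ∧ omegaLtWord w u} → Set (List α) :=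
      fun u => {v | (v ∈ L ∧ omegaLtWord w v) ∧
        (List.Lex (· < ·) u.1 v ∨ v = u.1)} with hB
    have hfin : ∀ u, (B u).Finite := by
      intro u
      apply Set.Finite.subset (Set.Finite.insert u.1 (finT (u.1.length + 1)))
      rintro v ⟨⟨hvL, hvlt⟩, hcmp⟩
      rcases hcmp with hlex | rfl
      · by_cases hpre : restrict w (u.1.length + 1) <+: v
        · exact absurd (key_gt w u.2.2 hpre) (asymm hlex)
        · exact Set.mem_insert_iff.2 (Or.inr ⟨hvL, hpre⟩)
      · exact Set.mem_insert _ _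
    refine ⟨fun u => (B u).ncard, ?_⟩
    intro u v huv
    refine Set.ncard_lt_ncard ⟨?_, ?_⟩ (hfin u)
    · rintro x ⟨hx1, hx2⟩
      refine ⟨hx1, Or.inl ?_⟩
      rcases hx2 with hlex | rfl
      · exact List.lex_trans (fun h₁ h₂ => lt_trans h₁ h₂) huv hlex
      · exact huv
    · intro hsub
      have huu : u.1 ∈ B u := ⟨u.2, Or.inr rfl⟩
      rcases (hsub huu).2 with hlex | heq
      · exact asymm huv hlex
      · rw [heq] at huv; exact asymm huv huv
end

section
/- Let K be a language and v a nonempty word. Then the set of ω-words {x·v^ω | x ∈ K} is finite if and only if the language {x : List α | v is not a suffix of x and x ++ v^k ∈ K for some k : ℕ} is finite. -/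
variable {α : Type*} [Fintype α] [LinearOrder α] [Nonempty α]

lemma ocat_append (u w : List α) (s : ℕ → α) : ocat (u ++ w) s = ocat u (ocat w s) := by
  funext i
  simp only [ocat, List.length_append]
  by_cases h1 : i < u.length
  · rw [dif_pos (by omega), dif_pos h1]
    simp [List.getElem_append_left h1]
  · rw [dif_neg h1]
    by_cases h2 : i < u.length + w.length
    · rw [dif_pos h2, dif_pos (by omega)]
      simp only [List.get_eq_getElem, List.getElem_append_right (le_of_not_gt h1)]
    · rw [dif_neg h2, dif_neg (by omega)]
      congr 1; omega

lemma ocat_nil (s : ℕ → α) : ocat ([] : List α) s = s := by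
  funext i; simp [ocat]

lemma ocat_wpow (v : List α) (hv : v ≠ []) : ocat v (wpow v hv) = wpow v hv := by
  funext i
  simp only [ocat, wpow]
  split
  · next h => congr 1; exact (Fin.ext (Nat.mod_eq_of_lt h)).symm
  · next h =>
      congr 1; apply Fin.ext
      simp only
      exact (Nat.mod_eq_sub_mod (by omega)).symm

lemma ocat_npow (v : List α) (hv : v ≠ []) (k : ℕ) :
    ocat (npow v k) (wpow v hv) = wpow v hv := by
  induction k with
  | zero => simp [npow, ocat_nil]
  | succ k ih =>
      have : npow v (k+1) = v ++ npow v k := by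
        simp [npow, List.replicate_succ]
      rw [this, ocat_append, ih, ocat_wpow]

lemma ocat_left_cancel (u : List α) (s t : ℕ → α) (h : ocat u s = ocat u t) : s = t := by
  funext i
  have := congrFun h (u.length + i)
  simp only [ocat, dif_neg (by omega : ¬ u.length + i < u.length)] at this
  simpa using this

lemma wpow_period (v : List α) (hv : v ≠ []) (i : ℕ) :
    wpow v hv (i + v.length) = wpow v hv i := by
  simp only [wpow]; congr 1; apply Fin.ext; simp [Nat.add_mod_right]

/-- Key lemma: if `z · v^ω = v^ω` and `|v| ≤ |z|` then `v <:+ z`. -/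
lemma suffix_of_ocat_eq (v z : List α) (hv : v ≠ [])
    (hz : ocat z (wpow v hv) = wpow v hv) (hlen : v.length ≤ z.length) : v <:+ z := by
  have hget : ∀ i (h : i < z.length), z[i] = wpow v hv i := by
    intro i h
    have := congrFun hz i
    simpa [ocat, dif_pos h] using this
  have hper : ∀ i, wpow v hv (i + z.length) = wpow v hv i := by
    intro i
    have := congrFun hz (i + z.length)
    simp only [ocat, dif_neg (by omega : ¬ i + z.length < z.length),
      Nat.add_sub_cancel] at this
    exact this.symm
  have hd : v = z.drop (z.length - v.length) := by
    apply List.ext_getElem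
    · simp; omega
    · intro j h1 h2
      rw [List.getElem_drop]
      have hj : z.length - v.length + j < z.length := by omega
      rw [hget _ hj]
      have e1 : z.length - v.length + j + v.length = j + z.length := by omega
      have : wpow v hv (z.length - v.length + j) = wpow v hv j := by
        calc wpow v hv (z.length - v.length + j)
            = wpow v hv (z.length - v.length + j + v.length) := (wpow_period v hv _).symm
          _ = wpow v hv (j + z.length) := by rw [e1]
          _ = wpow v hv j := hper j
      rw [this]
      show v[j] = v.get ⟨j % v.length, _⟩
      simp only [List.get_eq_getElem]
      congr 1
      exact (Nat.mod_eq_of_lt h1).symm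
  rw [hd]
  exact List.drop_suffix _ _

/-- Stripping trailing copies of `v`. -/
lemma strip (v : List α) (hv : v ≠ []) :
    ∀ n (y : List α), y.length ≤ n → ∃ x k, y = x ++ npow v k ∧ ¬ v <:+ x := by
  intro n
  induction n with
  | zero =>
      intro y hy
      refine ⟨y, 0, by simp [npow], ?_⟩
      intro ⟨t, ht⟩
      have := List.length_pos_iff.mpr hv
      have : y.length = 0 := by omega
      have : t.length + v.length = 0 := by rw [← List.length_append, ht, this]
      omega
  | succ n ih =>
      intro y hy
      by_cases h : v <:+ y
      · obtain ⟨t, ht⟩ := h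
        have hvp := List.length_pos_iff.mpr hv
        obtain ⟨x, k, hxk, hx⟩ := ih t (by
          have : t.length + v.length = y.length := by rw [← List.length_append, ht]
          omega)
        refine ⟨x, k + 1, ?_, hx⟩
        have hn : npow v (k+1) = npow v k ++ v := by
          simp [npow, List.replicate_succ']
        rw [hn, ← List.append_assoc, ← hxk, ht]
      · exact ⟨y, 0, by simp [npow], h⟩

lemma eq_restrict (x : List α) (s : ℕ → α) : x = restrict (ocat x s) x.length := by
  apply List.ext_getElem
  · simp [restrict]
  · intro i h1 h2
    simp only [restrict, List.getElem_ofFn]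
    simp [ocat, dif_pos h1]

lemma restrict_take (w : ℕ → α) (m n : ℕ) (h : m ≤ n) :
    (restrict w n).take m = restrict w m := by
  apply List.ext_getElem
  · simp [restrict]; omega
  · intro i h1 h2
    simp [restrict]

lemma fiber_finite (v : List α) (hv : v ≠ []) (w : ℕ → α) :
    {x : List α | ¬ v <:+ x ∧ ocat x (wpow v hv) = w}.Finite := by
  rcases Set.eq_empty_or_nonempty {x : List α | ¬ v <:+ x ∧ ocat x (wpow v hv) = w} with he | ⟨x₀, h0, he0⟩
  · rw [he]; exact Set.finite_empty
  · apply Set.Finite.subset ((Set.finite_Iio (x₀.length + v.length)).image (fun n => restrict w n))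
    rintro x ⟨hx, hex⟩
    have hxr : x = restrict w x.length := by rw [← hex]; exact eq_restrict x _
    refine ⟨x.length, ?_, hxr.symm⟩
    simp only [Set.mem_Iio]
    by_contra hbig
    push_neg at hbig
    have hle : x₀.length ≤ x.length := by omega
    have hx0r : x₀ = x.take x₀.length := by
      rw [hxr, restrict_take w _ _ hle, ← he0]
      exact eq_restrict x₀ _
    set z := x.drop x₀.length with hzdef
    have hsplit : x = x₀ ++ z := by rw [hx0r, hzdef, List.take_append_drop]
    have hzl : v.length ≤ z.length := by
      rw [hzdef, List.length_drop]; omega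
    have hcanc : ocat z (wpow v hv) = wpow v hv := by
      apply ocat_left_cancel x₀
      rw [← ocat_append, ← hsplit, hex, ← he0]
    have : v <:+ z := suffix_of_ocat_eq v z hv hcanc hzl
    exact hx (this.trans (hsplit ▸ List.suffix_append x₀ z))


/-- `{x·v^ω | x ∈ K}` is finite iff the language of words `x` not ending in
`v` with `x ++ v^k ∈ K` for some `k` is finite. -/
theorem stmt15 (K : Set (List α)) (v : List α) (hv : v ≠ []) :
    {w : ℕ → α | ∃ x ∈ K, w = ocat x (wpow v hv)}.Finite ↔
    {x : List α | ¬ v <:+ x ∧ ∃ k : ℕ, x ++ npow v k ∈ K}.Finite := by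
  constructor
  · intro hfin
    apply Set.Finite.subset (hfin.biUnion
      (fun w _ => fiber_finite v hv w))
    rintro x ⟨hx, k, hk⟩
    refine Set.mem_biUnion (show _ ∈ {w : ℕ → α | ∃ x ∈ K, w = ocat x (wpow v hv)} from
      ⟨x ++ npow v k, hk, rfl⟩) ⟨hx, ?_⟩
    rw [ocat_append, ocat_npow]
  · intro hfin
    apply Set.Finite.subset (hfin.image (fun x => ocat x (wpow v hv)))
    rintro w ⟨y, hy, rfl⟩
    obtain ⟨x, k, hxk, hxs⟩ := strip v hv y.length y le_rfl
    refine ⟨x, ⟨hxs, k, hxk ▸ hy⟩, ?_⟩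
    rw [hxk, ocat_append, ocat_npow]
end

section
/- Let L be a language. If there exists a function f : L → ℕ such that u <_ℓ v implies f u < f v for all u, v ∈ L (the lexicographic order on L embeds into ω), or there exists a function f : L → ℕ such that u <_ℓ v implies f v < f u (it embeds into ω* = −ω), then L has at most one limit, i.e., blim L is a subsingleton. -/
variable {α : Type*} [Fintype α] [LinearOrder α] [Nonempty α]

private lemma lex_app (x : List α) {y z : List α} {a b : α} (hab : a < b) :
    List.Lex (· < ·) (x ++ a :: y) (x ++ b :: z) := by
  induction x with
  | nil => exact List.Lex.rel hab
  | cons c x ih => exact List.Lex.cons ih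

private lemma lex_total {u v : List α} (h : u ≠ v) :
    List.Lex (· < ·) u v ∨ List.Lex (· < ·) v u := by
  rcases @lt_trichotomy (List α) _ u v with h1 | h1 | h1
  · exact Or.inl h1
  · exact absurd h1 h
  · exact Or.inr h1

private lemma restrict_succ (w : ℕ → α) (n : ℕ) :
    restrict w (n + 1) = restrict w n ++ [w n] := by
  simp only [restrict, List.ofFn_succ', Fin.coe_castSucc, Fin.val_last, List.concat_eq_append]

private lemma restrict_prefix (w : ℕ → α) {a b : ℕ} (h : a ≤ b) :
    restrict w a <+: restrict w b := by
  induction b, h using Nat.le_induction with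
  | base => exact List.prefix_refl _
  | succ b hb ih => rw [restrict_succ]; exact ih.trans (List.prefix_append _ _)

private lemma key {L : Set (List α)} (F : {u : List α // u ∈ L} → ℕ) (N : ℕ)
    (h : ∀ m : ℕ, ∃ (v : List α) (hv : v ∈ L), m < v.length ∧ F ⟨v, hv⟩ < N)
    (hinj : ∀ u v : {u : List α // u ∈ L}, u.1 ≠ v.1 → F u ≠ F v) : False := by
  choose c hc hlen hF using h
  let g : ℕ → ℕ := fun k => Nat.rec 0 (fun _ ih => (c ih).length) k
  have hg : StrictMono g := strictMono_nat_of_lt_succ (fun k => hlen (g k))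
  have hgl : ∀ k, (c (g k)).length = g (k + 1) := fun k => rfl
  let F' : ℕ → Fin N := fun k => ⟨F ⟨c (g k), hc _⟩, hF _⟩
  obtain ⟨k, k', hkk', heq⟩ := Finite.exists_ne_map_eq_of_infinite F'
  have hcne : c (g k) ≠ c (g k') := by
    intro he
    have : (c (g k)).length = (c (g k')).length := by rw [he]
    rw [hgl, hgl] at this
    exact hkk' (Nat.succ_injective (hg.injective this))
  exact hinj ⟨c (g k), hc _⟩ ⟨c (g k'), hc _⟩ hcne (congrArg Fin.val heq)

private lemma main_aux {L : Set (List α)} {w w' : ℕ → α}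
    (hw : w ∈ blim L) (hw' : w' ∈ blim L) {n : ℕ}
    (hagree : ∀ i < n, w i = w' i) (hlt : w n < w' n)
    (f : {u : List α // u ∈ L} → ℕ)
    (hf : ∀ u v : {u : List α // u ∈ L}, List.Lex (· < ·) u.1 v.1 → f u < f v) : False := by
  have hrn : restrict w n = restrict w' n := by
    unfold restrict; congr 1; funext i; exact hagree i i.isLt
  obtain ⟨u0, hu0L, hu0p, hu0ne⟩ := hw' (n + 1)
  obtain ⟨tu, htu⟩ := hu0p
  have hu0 : u0 = restrict w n ++ w' n :: tu := by
    rw [← htu, restrict_succ, hrn, List.append_assoc]; rfl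
  refine key f (f ⟨u0, hu0L⟩) (fun m => ?_) (fun u v huv heq => ?_)
  · obtain ⟨v, hvL, hvp, hvne⟩ := hw (max (n + 1) (m + 1))
    have hvlen : m < v.length := by
      have := hvp.length_le
      simp only [restrict, List.length_ofFn] at this
      omega
    refine ⟨v, hvL, hvlen, ?_⟩
    apply hf
    obtain ⟨tv, htv⟩ := (restrict_prefix w (le_max_left (n + 1) (m + 1))).trans hvp
    have hv : v = restrict w n ++ w n :: tv := by
      rw [← htv, restrict_succ, List.append_assoc]; rfl
    show List.Lex (· < ·) v u0
    rw [hv, hu0]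
    exact lex_app _ hlt
  · rcases lex_total huv with h1 | h1
    · exact absurd heq (ne_of_lt (hf u v h1))
    · exact absurd heq.symm (ne_of_lt (hf v u h1))

private lemma main_aux2 {L : Set (List α)} {w w' : ℕ → α}
    (hw : w ∈ blim L) (hw' : w' ∈ blim L) {n : ℕ}
    (hagree : ∀ i < n, w i = w' i) (hlt : w n < w' n)
    (f : {u : List α // u ∈ L} → ℕ)
    (hf : ∀ u v : {u : List α // u ∈ L}, List.Lex (· < ·) u.1 v.1 → f v < f u) : False := by
  have hrn : restrict w n = restrict w' n := by
    unfold restrict; congr 1; funext i; exact hagree i i.isLt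
  obtain ⟨u0, hu0L, hu0p, hu0ne⟩ := hw (n + 1)
  obtain ⟨tu, htu⟩ := hu0p
  have hu0 : u0 = restrict w n ++ w n :: tu := by
    rw [← htu, restrict_succ, List.append_assoc]; rfl
  refine key f (f ⟨u0, hu0L⟩) (fun m => ?_) (fun u v huv heq => ?_)
  · obtain ⟨v, hvL, hvp, hvne⟩ := hw' (max (n + 1) (m + 1))
    have hvlen : m < v.length := by
      have := hvp.length_le
      simp only [restrict, List.length_ofFn] at this
      omega
    refine ⟨v, hvL, hvlen, ?_⟩
    apply hf
    obtain ⟨tv, htv⟩ := (restrict_prefix w' (le_max_left (n + 1) (m + 1))).trans hvp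
    have hv : v = restrict w n ++ w' n :: tv := by
      rw [← htv, restrict_succ, hrn, List.append_assoc]; rfl
    show List.Lex (· < ·) u0 v
    rw [hv, hu0]
    exact lex_app _ hlt
  · rcases lex_total huv with h1 | h1
    · exact absurd heq.symm (ne_of_lt (hf u v h1))
    · exact absurd heq (ne_of_lt (hf v u h1))

/-- a language whose lexicographic order embeds into `ω` or into `ω* = -ω`
has at most one limit. -/
theorem stmt17 (L : Set (List α))
    (h : (∃ f : {u : List α // u ∈ L} → ℕ,
            ∀ u v : {u : List α // u ∈ L}, List.Lex (· < ·) u.1 v.1 → f u < f v) ∨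
         (∃ f : {u : List α // u ∈ L} → ℕ,
            ∀ u v : {u : List α // u ∈ L}, List.Lex (· < ·) u.1 v.1 → f v < f u)) :
    (blim L).Subsingleton := by
  intro w hw w' hw'
  by_contra hne
  have hex : ∃ i, w i ≠ w' i := by
    by_contra hc; push_neg at hc; exact hne (funext hc)
  have hne_n : w (Nat.find hex) ≠ w' (Nat.find hex) := Nat.find_spec hex
  have hagree : ∀ i < Nat.find hex, w i = w' i :=
    fun i hi => not_ne_iff.mp (Nat.find_min hex hi)
  rcases h with ⟨f, hf⟩ | ⟨f, hf⟩
  · rcases lt_or_gt_of_ne hne_n with hlt | hlt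
    · exact main_aux hw hw' hagree hlt f hf
    · exact main_aux hw' hw (fun i hi => (hagree i hi).symm) hlt f hf
  · rcases lt_or_gt_of_ne hne_n with hlt | hlt
    · exact main_aux2 hw hw' hagree hlt f hf
    · exact main_aux2 hw' hw (fun i hi => (hagree i hi).symm) hlt f hf
end
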